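/- Let P_t = ((t−1)/5)·(4+3ζ+2ζ²+ζ³, 4+3ζ²+2ζ⁴+ζ) ∈ ℂ² for t = 1,…,5. Then r(P_t) − P_t ∈ Λ for each t (so each P_t represents a fixed point of r on the torus ℂ²/Λ), and conversely any (z,w) ∈ ℂ² with r(z,w) − (z,w) ∈ Λ satisfies (z,w) − P_t ∈ Λ for exactly one t ∈ {1,…,5}; hence r has exactly 5 fixed points on ℂ²/Λ. -/
import Mathlib


noncomputable section

/-- The primitive fifth root of unity `ζ = exp(2πi/5)`. -/
def ζ : ℂ := Complex.exp (2 * Real.pi * Complex.I / 5)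

/-- The lattice `Λ ⊆ ℂ²` generated by `(1,1)`, `(ζ,ζ²)`, `(ζ²,ζ⁴)`, `(ζ³,ζ)`. -/
def Λ : AddSubgroup (ℂ × ℂ) :=
  AddSubgroup.closure {((1 : ℂ), (1 : ℂ)), (ζ, ζ ^ 2), (ζ ^ 2, ζ ^ 4), (ζ ^ 3, ζ)}

/-- The map `r(z,w) = (ζz, ζ²w)`. -/
def r (p : ℂ × ℂ) : ℂ × ℂ := (ζ * p.1, ζ ^ 2 * p.2)

/-- The points `P_t = ((t−1)/5)·(4+3ζ+2ζ²+ζ³, 4+3ζ²+2ζ⁴+ζ)` for `t = 1,…,5`;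
here `t : Fin 5` corresponds to `t − 1 ∈ {0,…,4}`. -/
def P (t : Fin 5) : ℂ × ℂ :=
  (((t : ℕ) : ℂ) / 5 * (4 + 3 * ζ + 2 * ζ ^ 2 + ζ ^ 3),
   ((t : ℕ) : ℂ) / 5 * (4 + 3 * ζ ^ 2 + 2 * ζ ^ 4 + ζ))

lemma hprim : IsPrimitiveRoot ζ 5 := by
  have h := Complex.isPrimitiveRoot_exp 5 (by norm_num)
  have : ζ = Complex.exp (2 * Real.pi * Complex.I / (5 : ℕ)) := by
    norm_num [ζ]
  rw [this]
  exact h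

lemma hζ_ne_one : ζ ≠ 1 := hprim.ne_one (by norm_num)

lemma hsum : ζ ^ 4 + ζ ^ 3 + ζ ^ 2 + ζ + 1 = 0 := by
  have h5 : ζ ^ 5 = 1 := hprim.pow_eq_one
  have hfac : (ζ - 1) * (ζ ^ 4 + ζ ^ 3 + ζ ^ 2 + ζ + 1) = 0 := by linear_combination h5
  rcases mul_eq_zero.mp hfac with h | h
  · exact absurd (sub_eq_zero.mp h) hζ_ne_one
  · exact h

open Polynomial in
/-- Linear independence of `1, ζ, ζ², ζ³` over `ℤ`. -/
lemma indep {a b c d : ℤ} (h : (a : ℂ) + b * ζ + c * ζ ^ 2 + d * ζ ^ 3 = 0) :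
    a = 0 ∧ b = 0 ∧ c = 0 ∧ d = 0 := by
  set p : ℚ[X] := C (a : ℚ) + C (b : ℚ) * X + C (c : ℚ) * X ^ 2 + C (d : ℚ) * X ^ 3 with hp
  by_cases hp0 : p = 0
  · have h0 := congrArg (fun q : ℚ[X] => q.coeff 0) hp0
    have h1 := congrArg (fun q : ℚ[X] => q.coeff 1) hp0
    have h2 := congrArg (fun q : ℚ[X] => q.coeff 2) hp0
    have h3 := congrArg (fun q : ℚ[X] => q.coeff 3) hp0
    simp only [hp, Polynomial.coeff_add, Polynomial.coeff_C_mul, Polynomial.coeff_C,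
      Polynomial.coeff_X, Polynomial.coeff_X_pow, Polynomial.coeff_zero] at h0 h1 h2 h3
    norm_num at h0 h1 h2 h3
    exact ⟨by exact_mod_cast h0, by exact_mod_cast h1, by exact_mod_cast h2,
      by exact_mod_cast h3⟩
  · exfalso
    have hae : aeval ζ p = 0 := by
      simp only [hp, map_add, map_mul, map_pow, aeval_C, aeval_X, map_intCast]
      linear_combination h
    have hdvd : minpoly ℚ ζ ∣ p := minpoly.dvd ℚ ζ hae
    have hd4 : (minpoly ℚ ζ).natDegree = 4 := by
      rw [← cyclotomic_eq_minpoly_rat hprim (by norm_num), natDegree_cyclotomic]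
      decide
    have hle : p.natDegree ≤ 3 := by
      rw [hp]
      compute_degree
    have := Polynomial.natDegree_le_of_dvd hdvd hp0
    omega

/-- Explicit description of membership in `Λ`. -/
lemma mem_Lambda {x : ℂ × ℂ} : x ∈ Λ ↔ ∃ a b c d : ℤ,
    x.1 = a + b * ζ + c * ζ ^ 2 + d * ζ ^ 3 ∧
    x.2 = a + b * ζ ^ 2 + c * ζ ^ 4 + d * ζ := by
  constructor
  · intro hx
    refine AddSubgroup.closure_induction
      (p := fun y _ => ∃ a b c d : ℤ,
        y.1 = a + b * ζ + c * ζ ^ 2 + d * ζ ^ 3 ∧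
        y.2 = a + b * ζ ^ 2 + c * ζ ^ 4 + d * ζ) ?_ ?_ ?_ ?_ hx
    · intro y hy
      simp only [Set.mem_insert_iff, Set.mem_singleton_iff] at hy
      rcases hy with rfl | rfl | rfl | rfl
      · exact ⟨1, 0, 0, 0, by push_cast; ring, by push_cast; ring⟩
      · exact ⟨0, 1, 0, 0, by push_cast; ring, by push_cast; ring⟩
      · exact ⟨0, 0, 1, 0, by push_cast; ring, by push_cast; ring⟩
      · exact ⟨0, 0, 0, 1, by push_cast; ring, by push_cast; ring⟩
    · exact ⟨0, 0, 0, 0, by simp, by simp⟩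
    · rintro x y _ _ ⟨a1, b1, c1, d1, e1, f1⟩ ⟨a2, b2, c2, d2, e2, f2⟩
      exact ⟨a1 + a2, b1 + b2, c1 + c2, d1 + d2,
        by rw [Prod.fst_add, e1, e2]; push_cast; ring,
        by rw [Prod.snd_add, f1, f2]; push_cast; ring⟩
    · rintro x _ ⟨a1, b1, c1, d1, e1, f1⟩
      exact ⟨-a1, -b1, -c1, -d1,
        by rw [Prod.fst_neg, e1]; push_cast; ring,
        by rw [Prod.snd_neg, f1]; push_cast; ring⟩
  · rintro ⟨a, b, c, d, h1, h2⟩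
    have m1 : ((1 : ℂ), (1 : ℂ)) ∈ Λ := AddSubgroup.subset_closure (by simp)
    have m2 : (ζ, ζ ^ 2) ∈ Λ := AddSubgroup.subset_closure (by simp)
    have m3 : (ζ ^ 2, ζ ^ 4) ∈ Λ := AddSubgroup.subset_closure (by simp)
    have m4 : (ζ ^ 3, ζ) ∈ Λ := AddSubgroup.subset_closure (by simp)
    have smul1 : ∀ (k : ℤ) (p : ℂ × ℂ), (k • p).1 = (k : ℂ) * p.1 := fun k p => by
      rw [Prod.smul_fst, zsmul_eq_mul]
    have smul2 : ∀ (k : ℤ) (p : ℂ × ℂ), (k • p).2 = (k : ℂ) * p.2 := fun k p => by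
      rw [Prod.smul_snd, zsmul_eq_mul]
    have hx : x = a • ((1 : ℂ), (1 : ℂ)) + b • (ζ, ζ ^ 2) + c • (ζ ^ 2, ζ ^ 4) + d • (ζ ^ 3, ζ) := by
      apply Prod.ext
      · simp only [Prod.fst_add, smul1, h1]
        ring
      · simp only [Prod.snd_add, smul2, h2]
        ring
    rw [hx]
    exact add_mem (add_mem (add_mem (AddSubgroup.zsmul_mem _ m1 a)
      (AddSubgroup.zsmul_mem _ m2 b)) (AddSubgroup.zsmul_mem _ m3 c))
      (AddSubgroup.zsmul_mem _ m4 d)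

/-- Each `P_t` is fixed by `r` on the torus `ℂ²/Λ`, and conversely every fixed point of `r`
on the torus is represented by exactly one `P_t`: `r` has exactly 5 fixed points. -/
theorem fixed_points_of_r :
    (∀ t : Fin 5, r (P t) - P t ∈ Λ) ∧
    (∀ z : ℂ × ℂ, r z - z ∈ Λ → ∃! t : Fin 5, z - P t ∈ Λ) := by
  constructor
  · intro t
    rw [mem_Lambda]
    refine ⟨-((t : ℕ) : ℤ), 0, 0, 0, ?_, ?_⟩
    · simp only [Prod.fst_sub, r, P]
      push_cast
      linear_combination (((t : ℕ) : ℂ) / 5) * hsum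
    · simp only [Prod.snd_sub, r, P]
      push_cast
      linear_combination (((t : ℕ) : ℂ) / 5) * (1 - 2 * ζ + 2 * ζ ^ 2) * hsum
  · intro z hz
    rw [mem_Lambda] at hz
    obtain ⟨a, b, c, d, h1, h2⟩ := hz
    simp only [Prod.fst_sub, Prod.snd_sub, r] at h1 h2
    set n : ℤ := -(a + b + c + d) with hn
    have hT0 : 0 ≤ n % 5 := Int.emod_nonneg n (by norm_num)
    have hT5 : n % 5 < 5 := Int.emod_lt_of_pos n (by norm_num)
    set t : Fin 5 := ⟨(n % 5).toNat, by omega⟩ with ht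
    have htZ : ((t : ℕ) : ℤ) = n % 5 := by
      simp only [ht]
      exact Int.toNat_of_nonneg hT0
    have htC : ((t : ℕ) : ℂ) = ((n % 5 : ℤ) : ℂ) := by exact_mod_cast htZ
    set m : ℤ := -(n / 5) with hm
    have hkey : 5 * m = a + (n % 5) + b + c + d := by
      have := Int.emod_add_mul_ediv n 5
      omega
    have hkeyC : (5 : ℂ) * (m : ℤ) = (a : ℂ) + ((n % 5 : ℤ) : ℂ) + b + c + d := by
      exact_mod_cast hkey
    have hζ1 : ζ - 1 ≠ 0 := sub_ne_zero.mpr hζ_ne_one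
    have hζ2 : ζ ^ 2 - 1 ≠ 0 := sub_ne_zero.mpr (hprim.pow_ne_one_of_pos_of_lt
      (by norm_num) (by norm_num))
    have hmem : z - P t ∈ Λ := by
      rw [mem_Lambda]
      refine ⟨-(a + n % 5) + m, -(a + n % 5) + 2 * m - b, -(a + n % 5) + 3 * m - b - c, -m,
        ?_, ?_⟩
      · apply mul_right_cancel₀ (mul_ne_zero (by norm_num : (5 : ℂ) ≠ 0) hζ1)
        simp only [Prod.fst_sub, P, htC]
        push_cast
        linear_combination (5 : ℂ) * h1 + ((5 : ℂ) * m - ((n % 5 : ℤ) : ℂ)) * hsum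
          - 5 * ζ ^ 3 * hkeyC
      · apply mul_right_cancel₀ (mul_ne_zero (by norm_num : (5 : ℂ) ≠ 0) hζ2)
        simp only [Prod.snd_sub, P, htC]
        push_cast
        linear_combination (5 : ℂ) * h2 +
          (((5 : ℂ) * m - ((n % 5 : ℤ) : ℂ))
            + (15 * (m : ℂ) - 3 * ((n % 5 : ℤ) : ℂ) - 5 * a - 5 * b - 5 * c) * ζ
            + (-15 * (m : ℂ) + 3 * ((n % 5 : ℤ) : ℂ) + 5 * a + 5 * b + 5 * c) * ζ ^ 2) * hsum
          - 5 * ζ * hkeyC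
    refine ⟨t, hmem, ?_⟩
    intro t' ht'
    have hsub : P t - P t' ∈ Λ := by
      have heq : P t - P t' = (z - P t') - (z - P t) := by ring
      rw [heq]
      exact sub_mem ht' hmem
    rw [mem_Lambda] at hsub
    obtain ⟨a', b', c', d', e1, _⟩ := hsub
    simp only [Prod.fst_sub, P] at e1
    have hcomb : ((4 * (((t : ℕ) : ℤ) - ((t' : ℕ) : ℤ)) - 5 * a' : ℤ) : ℂ)
        + ((3 * (((t : ℕ) : ℤ) - ((t' : ℕ) : ℤ)) - 5 * b' : ℤ) : ℂ) * ζ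
        + ((2 * (((t : ℕ) : ℤ) - ((t' : ℕ) : ℤ)) - 5 * c' : ℤ) : ℂ) * ζ ^ 2
        + (((((t : ℕ) : ℤ) - ((t' : ℕ) : ℤ)) - 5 * d' : ℤ) : ℂ) * ζ ^ 3 = 0 := by
      push_cast
      linear_combination 5 * e1
    obtain ⟨g1, g2, g3, g4⟩ := indep hcomb
    have hlt : (t : ℕ) < 5 := t.isLt
    have hlt' : (t' : ℕ) < 5 := t'.isLt
    have : (t' : ℕ) = (t : ℕ) := by omega
    exact Fin.ext this

end
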